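/- arXiv:1511.06891 — 2 statements merged into one kernel-verified Lean document; each statement's English description precedes it below -/
import Mathlib

section
/- Let F : Finset V → ℝ be nonnegative, nondecreasing (F(A) ≤ F(A') whenever A ⊆ A'), ε-submodular, and F(∅) = 0. Let X* be any set of size N maximizing F among N-subsets, and let X^N be the set obtained by N steps of greedy selection (each step adding an element maximizing the marginal gain of F). Then F(X^N) ≥ (1 - 1/e)(F(X*) - Nε). -/
/-!
Put `D k = F X* - N ε - F(X^k)`. Covering `X*` by `X^k` and the at most `N` elements of
`X* \ X^k`, ε-submodularity bounds `F X* - F(X^k)` by `N` times (greedy gain `+ ε`), which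
rearranges to `D (k+1) ≤ (1 - 1/N) D k`: the `ε` terms cancel. Hence
`D N ≤ (1 - 1/N)^N D 0 ≤ D 0 / e` when `D 0 ≥ 0`, and otherwise `F ≥ 0` suffices.
-/

/-- `ε`-submodularity of a set function on subsets of a finite type. -/
def EpsSubmodular {V : Type*} [Fintype V] [DecidableEq V]
    (F : Finset V → ℝ) (ε : ℝ) : Prop :=
  ∀ A A' : Finset V, A ⊆ A' → ∀ a : V, a ∉ A' →
    F (insert a A') - F A' ≤ F (insert a A) - F A + ε

namespace EpsSubmodular

variable {V : Type*} [Fintype V] [DecidableEq V] {F : Finset V → ℝ} {ε : ℝ}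

theorem nonneg [Nonempty V] (hsub : EpsSubmodular F ε) : 0 ≤ ε := by
  obtain ⟨a⟩ := ‹Nonempty V›
  simpa using hsub ∅ ∅ subset_rfl a (Finset.notMem_empty a)

theorem union_le_add_sum (hsub : EpsSubmodular F ε) (S T : Finset V) :
    F (S ∪ T) ≤ F T + ∑ a ∈ S \ T, (F (insert a T) - F T + ε) := by
  induction S using Finset.induction_on with
  | empty => simp
  | @insert a S ha ih =>
    by_cases haT : a ∈ T
    · rwa [Finset.insert_union, Finset.insert_eq_of_mem (Finset.mem_union_right S haT),
        Finset.insert_sdiff_of_mem _ haT]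
    · rw [Finset.insert_union, Finset.insert_sdiff_of_notMem _ haT,
        Finset.sum_insert (by simp [ha])]
      have := hsub T (S ∪ T) Finset.subset_union_right a (by simp [ha, haT])
      linarith

theorem sub_le_mul_max_gain (hsub : EpsSubmodular F ε) (hmono : Monotone F) (hε : 0 ≤ ε)
    {S T : Finset V} {N : ℕ} (hS : S.card ≤ N) {a : V}
    (hmax : ∀ b ∉ T, F (insert b T) - F T ≤ F (insert a T) - F T) :
    F S - F T ≤ N * (F (insert a T) - F T + ε) := by
  have hgain : 0 ≤ F (insert a T) - F T + ε := by
    linarith [hmono (Finset.subset_insert a T)]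
  have hcard : ((S \ T).card : ℝ) ≤ N := by
    exact_mod_cast (Finset.card_le_card Finset.sdiff_subset).trans hS
  have := calc
    F S ≤ F (S ∪ T) := hmono Finset.subset_union_left
    _ ≤ F T + ∑ b ∈ S \ T, (F (insert b T) - F T + ε) := hsub.union_le_add_sum S T
    _ ≤ F T + (S \ T).card * (F (insert a T) - F T + ε) := by
      rw [← nsmul_eq_mul]
      gcongr
      exact Finset.sum_le_card_nsmul _ _ _ fun b hb =>
        add_le_add_left (hmax b (Finset.mem_sdiff.mp hb).2) ε
    _ ≤ F T + N * (F (insert a T) - F T + ε) := by gcongr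
  linarith

end EpsSubmodular

theorem le_one_sub_inv_pow_mul {u : ℕ → ℝ} {r : ℝ} (hr : 1 ≤ r) (n : ℕ)
    (h : ∀ k < n, u k ≤ r * (u k - u (k + 1))) : u n ≤ (1 - 1 / r) ^ n * u 0 := by
  have hr0 : 0 < r := by linarith
  refine le_geom (sub_nonneg.mpr (div_le_one_of_le₀ hr hr0.le)) n fun k hk => ?_
  have : u k / r ≤ u k - u (k + 1) := by rw [div_le_iff₀ hr0]; linarith [h k hk]
  linarith [one_sub_mul (1 / r) (u k), one_div_mul_eq_div r (u k)]

theorem one_sub_inv_exp_mul_le {x y q : ℝ} (hy : 0 ≤ y) (hq : q ≤ 1 / Real.exp 1)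
    (h : x - y ≤ q * x) : (1 - 1 / Real.exp 1) * x ≤ y := by
  rcases le_or_gt 0 x with hx | hx
  · nlinarith [mul_le_mul_of_nonneg_right hq hx]
  · have : 1 / Real.exp 1 ≤ 1 :=
      div_le_one_of_le₀ (Real.one_le_exp zero_le_one) (Real.exp_pos 1).le
    nlinarith

theorem greedy_near_optimal_general {V : Type*} [Fintype V] [DecidableEq V]
    (N : ℕ) (hN : 1 ≤ N)
    (F : Finset V → ℝ) (ε : ℝ)
    (hmono : ∀ A A' : Finset V, A ⊆ A' → F A ≤ F A')
    (hsub : EpsSubmodular F ε)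
    (hempty : F ∅ = 0)
    (Xstar : Finset V) (hXstarCard : Xstar.card = N)
    (X : ℕ → Finset V) (hX0 : X 0 = ∅)
    (hgreedy : ∀ k, k < N → ∃ a : V, a ∉ X k ∧ X (k + 1) = insert a (X k) ∧
      ∀ b : V, b ∉ X k →
        F (insert b (X k)) - F (X k) ≤ F (insert a (X k)) - F (X k)) :
    (1 - 1 / Real.exp 1) * (F Xstar - (N : ℝ) * ε) ≤ F (X N) := by
  have hF : Monotone F := fun A A' h => hmono A A' h
  have hε : 0 ≤ ε := by
    obtain ⟨a, -⟩ := Finset.card_pos.mp (hXstarCard ▸ hN)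
    have : Nonempty V := ⟨a⟩
    exact hsub.nonneg
  have hstep : ∀ k < N, F Xstar - N * ε - F (X k) ≤
      N * ((F Xstar - N * ε - F (X k)) - (F Xstar - N * ε - F (X (k + 1)))) := by
    intro k hk
    obtain ⟨a, -, hXk, hmax⟩ := hgreedy k hk
    have := hsub.sub_le_mul_max_gain hF hε hXstarCard.le hmax
    rw [← hXk] at this
    linarith
  have hgeom := le_one_sub_inv_pow_mul (u := fun k => F Xstar - N * ε - F (X k))
    (by exact_mod_cast hN) N hstep
  simp only [hX0, hempty, sub_zero] at hgeom
  have hexp : (1 - 1 / (N : ℝ)) ^ N ≤ 1 / Real.exp 1 := by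
    simpa [Real.exp_neg] using Real.one_sub_div_pow_le_exp_neg (t := 1) (by exact_mod_cast hN)
  exact one_sub_inv_exp_mul_le (hempty ▸ hF (Finset.empty_subset _)) hexp (by linarith)

/-- Performance guarantee of greedy selection for a nonnegative, nondecreasing,
`ε`-submodular set function `F` with `F ∅ = 0`: after `N` greedy steps,
`F(X^N) ≥ (1 - 1/e)(F(X*) - N ε)` where `X*` is an optimal `N`-subset. -/
theorem greedy_near_optimal {V : Type*} [Fintype V] [DecidableEq V]
    (N : ℕ) (hN : 1 ≤ N) (hNcard : N ≤ Fintype.card V)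
    (F : Finset V → ℝ) (ε : ℝ)
    (hnonneg : ∀ A : Finset V, 0 ≤ F A)
    (hmono : ∀ A A' : Finset V, A ⊆ A' → F A ≤ F A')
    (hsub : EpsSubmodular F ε)
    (hempty : F ∅ = 0)
    (Xstar : Finset V) (hXstarCard : Xstar.card = N)
    (hopt : ∀ S : Finset V, S.card = N → F S ≤ F Xstar)
    (X : ℕ → Finset V) (hX0 : X 0 = ∅)
    (hgreedy : ∀ k, k < N → ∃ a : V, a ∉ X k ∧ X (k + 1) = insert a (X k) ∧
      ∀ b : V, b ∉ X k →
        F (insert b (X k)) - F (X k) ≤ F (insert a (X k)) - F (X k)) :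
    (1 - 1 / Real.exp 1) * (F Xstar - (N : ℝ) * ε) ≤ F (X N) :=
  greedy_near_optimal_general N hN F ε hmono hsub hempty Xstar hXstarCard X hX0 hgreedy
end

section
/- Let N ≥ 1, σ_s² > 0, σ_n² > 0, ε₁ > 0, and 0 < q < min(σ_n²/(2N σ_s²), (1/(4σ_s²))(√(ε₁² + 4ε₁σ_n²/N) - ε₁)). Then 4N σ_s⁴ q² / (σ_n² - 2N σ_s² q) ≤ ε₁ and σ_n² - 2N σ_s² q > 0. -/
/- Writing `x = 4 σ_s² q`, the inequality `4Nσ_s⁴q² ≤ ε₁ (σ_n² - 2Nσ_s²q)` is, after multiplying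
by `4/N`, the quadratic inequality `(x + ε₁)² ≤ ε₁² + 4ε₁σ_n²/N`, whose solutions are exactly
`x ≤ √(ε₁² + 4ε₁σ_n²/N) - ε₁` among `x ≥ -ε₁`. -/

lemma mul_sq_le_mul_sub_of_sq_add_le {N s n ε q : ℝ} (hN : 0 < N)
    (h : (4 * s * q + ε) ^ 2 ≤ ε ^ 2 + 4 * ε * n / N) :
    4 * N * s ^ 2 * q ^ 2 ≤ ε * (n - 2 * N * s * q) := by
  have hmul : N * (4 * s * q + ε) ^ 2 ≤ N * ε ^ 2 + 4 * ε * n := by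
    calc N * (4 * s * q + ε) ^ 2 ≤ N * (ε ^ 2 + 4 * ε * n / N) := by gcongr
      _ = N * ε ^ 2 + 4 * ε * n := by field_simp
  linear_combination hmul / 4

theorem variance_reduction_spread_bound_general (N : ℕ) (hN : 1 ≤ N)
    (σssq σnsq ε₁ q : ℝ) (hσs : 0 < σssq) (hε₁ : 0 < ε₁)
    (hq : 0 < q)
    (hqlt : q < min (σnsq / (2 * (N : ℝ) * σssq))
      ((1 / (4 * σssq)) *
        (Real.sqrt (ε₁ ^ 2 + 4 * ε₁ * σnsq / (N : ℝ)) - ε₁))) :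
    4 * (N : ℝ) * σssq ^ 2 * q ^ 2 / (σnsq - 2 * (N : ℝ) * σssq * q) ≤ ε₁ ∧
    0 < σnsq - 2 * (N : ℝ) * σssq * q := by
  have hN' : (0 : ℝ) < N := Nat.cast_pos.mpr hN
  obtain ⟨hq_noise, hq_sqrt⟩ := lt_min_iff.mp hqlt
  have hD : 0 < σnsq - 2 * N * σssq * q :=
    sub_pos.mpr ((lt_div_iff₀' (by positivity)).mp hq_noise)
  rw [one_div_mul_eq_div, lt_div_iff₀' (by positivity)] at hq_sqrt
  have hsq : (4 * σssq * q + ε₁) ^ 2 < ε₁ ^ 2 + 4 * ε₁ * σnsq / N :=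
    (Real.lt_sqrt (by positivity)).mp (by linarith)
  refine ⟨(div_le_iff₀ hD).mpr ?_, hD⟩
  linarith [mul_sq_le_mul_sub_of_sq_add_le hN' hsq.le]

/-- Algebraic core of Lemma 3: if
`0 < q < min(σ_n²/(2Nσ_s²), (1/(4σ_s²))(√(ε₁² + 4ε₁σ_n²/N) - ε₁))`, then
`4Nσ_s⁴q²/(σ_n² - 2Nσ_s²q) ≤ ε₁` and `σ_n² - 2Nσ_s²q > 0`. -/
theorem variance_reduction_spread_bound (N : ℕ) (hN : 1 ≤ N)
    (σssq σnsq ε₁ q : ℝ) (hσs : 0 < σssq) (hσn : 0 < σnsq) (hε₁ : 0 < ε₁)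
    (hq : 0 < q)
    (hqlt : q < min (σnsq / (2 * (N : ℝ) * σssq))
      ((1 / (4 * σssq)) *
        (Real.sqrt (ε₁ ^ 2 + 4 * ε₁ * σnsq / (N : ℝ)) - ε₁))) :
    4 * (N : ℝ) * σssq ^ 2 * q ^ 2 / (σnsq - 2 * (N : ℝ) * σssq * q) ≤ ε₁ ∧
    0 < σnsq - 2 * (N : ℝ) * σssq * q :=
  variance_reduction_spread_bound_general N hN σssq σnsq ε₁ q hσs hε₁ hq hqlt
end
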